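/- arXiv:math/0611923 — 2 statements merged into one kernel-verified Lean document; each statement's English description precedes it below -/
import Mathlib

section
/- For every n ≥ 2, the number of permutations π ∈ S_n that avoid the generalized pattern 3-12 and satisfy π_n = n equals the Bell number B_{n-1}; and for every k with 1 ≤ k ≤ n-1, the number of permutations π ∈ S_n that avoid 3-12 and satisfy π_n = k equals ∇^{k-1}(B_{n-1}) = Σ_{i=0}^{k-1} (-1)^i · C(k-1, i) · B_{n-1-i}. -/
/-- `π` avoids the generalized pattern 3-12. -/
def Avoids3d12 {n : ℕ} (π : Equiv.Perm (Fin n)) : Prop :=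
  ¬ ∃ (i j : Fin n) (h : j.1 + 1 < n), i < j ∧ π j < π ⟨j.1 + 1, h⟩ ∧ π ⟨j.1 + 1, h⟩ < π i

/-- The `m`-th Bell number: the number of partitions of a set with `m` elements,
equivalently the number of equivalence relations (setoids) on `Fin m`. -/
noncomputable def bell (m : ℕ) : ℕ := Nat.card (Setoid (Fin m))

/-!
Deleting the last entry `k` of a permutation `π` of `Fin (t + 2)` and standardizing the rest gives
a permutation `τ` of `Fin (t + 1)`. The only occurrences of 3-12 in `π` not seen in `τ` end at the
last two positions, so `π` avoids 3-12 iff `τ` does and either `k` is the largest value or the last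
entry of `τ` is at least `k`. Hence, if `G m c` counts the avoiders in `S_{m+1}` whose last entry is
at least `c`, then `G (m + 1) c = G m c + G (m + 1) (c + 1)` for `c ≤ m` and
`G (m + 1) (m + 1) = G m 0`. This is the recursion of iterated differences, and it gives
`G m c = ∇^c B (m + 1)`. The top case `∇^m B (m + 1) = B m` is the binomial inversion of the Bell
recurrence `B (m + 1) = ∑ j, C(m, j) B j`, which comes from splitting a partition of `Option α`
into the block of `none` and a partition of the rest.
-/

open Finset Equiv
open scoped fwdDiff

instance Setoid.finite {α : Type*} [Finite α] : Finite (Setoid α) :=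
  Finite.of_injective (fun R : Setoid α => ⇑R) fun _ _ => Setoid.eq_iff_rel_eq.2

namespace Setoid
variable {α : Type*}

def noneBlock (R : Setoid (Option α)) : Set α := {a | R (some a) none}

@[simp]
theorem mem_noneBlock {R : Setoid (Option α)} {a : α} : a ∈ R.noneBlock ↔ R (some a) none :=
  Iff.rfl

open Classical in
/-- The block of `none` is `insert none (some '' s)`; on `sᶜ` the setoid restricts to `Q`. -/
noncomputable def extendNone (s : Set α) (Q : Setoid ↥sᶜ) : Setoid (Option α) :=
  ker fun x => x.bind fun a => if h : a ∈ s then none else some (Quotient.mk Q ⟨a, h⟩)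

open Classical in
theorem extendNone_iff {s : Set α} {Q : Setoid ↥sᶜ} {x y : Option α} : extendNone s Q x y ↔
    (x.bind fun a => if h : a ∈ s then none else some (Quotient.mk Q ⟨a, h⟩)) =
      y.bind fun a => if h : a ∈ s then none else some (Quotient.mk Q ⟨a, h⟩) :=
  ker_def

theorem noneBlock_extendNone (s : Set α) (Q : Setoid ↥sᶜ) : (extendNone s Q).noneBlock = s := by
  ext a
  by_cases h : a ∈ s <;> simp [noneBlock, extendNone_iff, h]

noncomputable def noneBlockFiberEquiv (s : Set α) :
    {R : Setoid (Option α) // R.noneBlock = s} ≃ Setoid ↥sᶜ where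
  toFun R := R.1.comap (some ∘ Subtype.val)
  invFun Q := ⟨extendNone s Q, noneBlock_extendNone s Q⟩
  left_inv := by
    rintro ⟨R, rfl⟩
    refine Subtype.ext (Setoid.ext ?_)
    rintro (_ | a) (_ | b)
    · simp
    · simpa [extendNone_iff] using R.comm'
    · simp [extendNone_iff]
    · by_cases ha : R (some a) none <;> by_cases hb : R (some b) none
      · simpa [extendNone_iff, ha, hb] using R.trans ha (R.symm hb)
      · simpa [extendNone_iff, ha, hb] using fun hab => hb (R.trans (R.symm hab) ha)
      · simpa [extendNone_iff, ha, hb] using fun hab => ha (R.trans hab hb)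
      · simp [extendNone_iff, ha, hb, Quotient.eq, comap_rel]
  right_inv Q := Setoid.ext fun a b => by
    have ha : (a : α) ∉ s := a.2
    have hb : (b : α) ∉ s := b.2
    simp [extendNone_iff, comap_rel, ha, hb, Quotient.eq]

theorem card_option [Fintype α] :
    Nat.card (Setoid (Option α)) = ∑ s : Set α, Nat.card (Setoid ↥sᶜ) := by
  rw [← Nat.card_sigma]
  exact Nat.card_congr ((Equiv.sigmaFiberEquiv noneBlock).symm.trans
    (Equiv.sigmaCongrRight noneBlockFiberEquiv))

end Setoid

def Equiv.setoidCongr {α β : Type*} (e : α ≃ β) : Setoid α ≃ Setoid β where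
  toFun R := R.comap e.symm
  invFun Q := Q.comap e
  left_inv R := Setoid.ext fun a b => by simp [Setoid.comap_rel]
  right_inv Q := Setoid.ext fun a b => by simp [Setoid.comap_rel]

theorem Setoid.card_eq_bell {α : Type*} [Finite α] : Nat.card (Setoid α) = bell (Nat.card α) :=
  Nat.card_congr (Finite.equivFin α).setoidCongr

theorem bell_succ (m : ℕ) : bell (m + 1) = ∑ i ∈ range (m + 1), m.choose i * bell (m - i) := by
  calc bell (m + 1) = Nat.card (Setoid (Option (Fin m))) := by
        rw [Setoid.card_eq_bell, Finite.card_option, Nat.card_eq_fintype_card, Fintype.card_fin]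
    _ = ∑ s : Finset (Fin m), bell (m - #s) := by
        rw [Setoid.card_option, ← Fintype.sum_equiv Fintype.finsetEquivSet _ _ fun _ => rfl]
        refine Fintype.sum_congr _ _ fun s => ?_
        rw [Setoid.card_eq_bell, Nat.card_coe_set_eq, Set.ncard_compl, Nat.card_eq_fintype_card,
          Fintype.card_fin, Fintype.finsetEquivSet_apply, Set.ncard_coe_finset]
    _ = _ := by
        rw [← powerset_univ, sum_powerset_apply_card fun i => bell (m - i), card_univ,
          Fintype.card_fin]
        simp

theorem bell_zero : bell 0 = 1 :=
  Nat.card_eq_one_iff_unique.2 ⟨⟨fun _ _ => Setoid.ext fun a => a.elim0⟩, ⟨⊥⟩⟩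

theorem bell_eq_natBell : ∀ m, bell m = Nat.bell m
  | 0 => bell_zero.trans Nat.bell_zero.symm
  | m + 1 => by
    rw [bell_succ, Nat.bell_succ, ← Nat.range_succ_eq_Iic]
    exact sum_congr rfl fun i _ => by rw [bell_eq_natBell (m - i)]

theorem fwdDiff_iter_eq_sum_sub (a : ℕ → ℤ) (c y : ℕ) :
    (Δ_[1])^[c] a y = ∑ i ∈ range (c + 1), (-1 : ℤ) ^ i * c.choose i * a (y + c - i) := by
  rw [fwdDiff_iter_eq_sum_shift, ← sum_range_reflect]
  refine sum_congr rfl fun i hi => ?_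
  have hi : i ≤ c := Nat.lt_succ_iff.1 (mem_range.1 hi)
  rw [Nat.add_sub_cancel, Nat.sub_sub_self hi, Nat.choose_symm hi, smul_eq_mul, smul_eq_mul,
    mul_one, Nat.add_sub_assoc hi]

theorem fwdDiff_iter_sum_choose_mul (b : ℕ → ℤ) (N m : ℕ) :
    (Δ_[1])^[m] (fun x => ∑ j ∈ range N, b j * x.choose j) 0 = if m < N then b m else 0 := by
  have hsum : (fun x : ℕ => ∑ j ∈ range N, b j * x.choose j) =
      ∑ j ∈ range N, b j • fun x => (x.choose j : ℤ) := by
    ext x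
    simp
  rw [hsum, fwdDiff_iter_finsetSum, Finset.sum_apply]
  simp only [fwdDiff_iter_const_smul, Pi.smul_apply, fwdDiff_iter_choose_zero, smul_eq_mul,
    mul_ite, mul_one, mul_zero, sum_ite_eq, mem_range]

theorem Nat.bell_succ_eq_sum_range {x N : ℕ} (hx : x < N) :
    (Nat.bell (x + 1) : ℤ) = ∑ j ∈ range N, (Nat.bell j : ℤ) * x.choose j := by
  rw [Nat.bell_succ, ← Nat.range_succ_eq_Iic, ← sum_range_reflect]
  push_cast
  rw [← sum_subset (range_subset_range.2 hx)]
  · refine sum_congr rfl fun j hj => ?_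
    have hj : j ≤ x := Nat.lt_succ_iff.1 (mem_range.1 hj)
    rw [Nat.sub_sub_self hj, Nat.choose_symm hj, mul_comm]
  · intro j _ hj
    rw [Nat.choose_eq_zero_of_lt (by simpa using hj)]
    simp

theorem fwdDiff_iter_bell_one (m : ℕ) : (Δ_[1])^[m] (fun x => (Nat.bell x : ℤ)) 1 = Nat.bell m := by
  have h := fwdDiff_iter_sum_choose_mul (fun j => (Nat.bell j : ℤ)) (m + 1) m
  rw [if_pos m.lt_succ_self] at h
  rw [← h, ← zero_add 1, ← fwdDiff_iter_comp_add, fwdDiff_iter_eq_sum_shift,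
    fwdDiff_iter_eq_sum_shift]
  refine sum_congr rfl fun x hx => ?_
  simp only [zero_add, smul_eq_mul, mul_one]
  rw [Nat.bell_succ_eq_sum_range (mem_range.1 hx)]

def Contains3d12 {α : Type*} [LT α] {n : ℕ} (f : Fin (n + 1) → α) : Prop :=
  ∃ (i : Fin (n + 1)) (j : Fin n), i < j.castSucc ∧ f j.castSucc < f j.succ ∧ f j.succ < f i

theorem avoids3d12_iff_not_contains3d12 {n : ℕ} (π : Perm (Fin (n + 1))) :
    Avoids3d12 π ↔ ¬ Contains3d12 ⇑π := by
  refine not_congr ⟨fun ⟨i, j, h, hij, h₁, h₂⟩ => ⟨i, ⟨j, by omega⟩, hij, h₁, h₂⟩, ?_⟩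
  rintro ⟨i, j, hij, h₁, h₂⟩
  exact ⟨i, j.castSucc, by simp, hij, h₁, h₂⟩

theorem contains3d12_comp_iff {α β : Type*} [LinearOrder α] [Preorder β] {n : ℕ} {g : α → β}
    (hg : StrictMono g) (f : Fin (n + 1) → α) : Contains3d12 (g ∘ f) ↔ Contains3d12 f := by
  simp [Contains3d12, hg.lt_iff_lt]

theorem contains3d12_iff_init {α : Type*} [Preorder α] {n : ℕ} (f : Fin (n + 2) → α) :
    Contains3d12 f ↔ Contains3d12 (f ∘ Fin.castSucc) ∨
      f (Fin.last n).castSucc < f (Fin.last (n + 1)) ∧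
        ∃ i : Fin (n + 1), f (Fin.last (n + 1)) < f i.castSucc := by
  constructor
  · rintro ⟨i, j, hij, h₁, h₂⟩
    obtain ⟨i, rfl⟩ := Fin.exists_castSucc_eq.2 (hij.trans_le (Fin.le_last _)).ne
    induction j using Fin.lastCases with
    | last => exact Or.inr ⟨by simpa using h₁, i, by simpa using h₂⟩
    | cast j =>
      refine Or.inl ⟨i, j, by simpa using hij, ?_, ?_⟩ <;>
        simpa only [Function.comp_apply, Fin.succ_castSucc]
  · rintro (⟨i, j, hij, h₁, h₂⟩ | ⟨h₁, i, h₂⟩)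
    · refine ⟨i.castSucc, j.castSucc, by simpa using hij, ?_, ?_⟩ <;>
        simpa only [Function.comp_apply, Fin.succ_castSucc]
    · have hi : i ≠ Fin.last n := by
        rintro rfl
        exact h₁.not_gt h₂
      refine ⟨i.castSucc, Fin.last n, ?_, by simpa using h₁, by simpa using h₂⟩
      simpa using Fin.lt_last_iff_ne_last.2 hi

def Fin.permLastEqEquiv {t : ℕ} (k : Fin (t + 2)) :
    {π : Perm (Fin (t + 2)) // π (Fin.last (t + 1)) = k} ≃ Perm (Fin (t + 1)) :=
  ((equivCongr finSuccEquivLast (Equiv.refl _)).subtypeEquiv fun π => by simp).trans <|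
    (optionSubtype k).trans (equivCongr (Equiv.refl _) (finSuccAboveEquiv k).symm)

theorem Fin.succAbove_permLastEqEquiv {t : ℕ} (k : Fin (t + 2))
    (π : {π : Perm (Fin (t + 2)) // π (Fin.last (t + 1)) = k}) (j : Fin (t + 1)) :
    k.succAbove (Fin.permLastEqEquiv k π j) = π.1 j.castSucc := by
  have h := congrArg Subtype.val ((finSuccAboveEquiv k).apply_symm_apply
    (optionSubtype k ⟨equivCongr finSuccEquivLast (Equiv.refl _) π.1, by simp [π.2]⟩ j))
  rw [finSuccAboveEquiv_apply] at h
  simpa [Fin.permLastEqEquiv] using h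

theorem avoids3d12_iff_permLastEqEquiv {t : ℕ} (k : Fin (t + 2))
    (π : {π : Perm (Fin (t + 2)) // π (Fin.last (t + 1)) = k}) :
    Avoids3d12 π.1 ↔ Avoids3d12 (Fin.permLastEqEquiv k π) ∧
      (k ≤ (Fin.permLastEqEquiv k π (Fin.last t)).castSucc ∨ k = Fin.last (t + 1)) := by
  have hv := Fin.succAbove_permLastEqEquiv k π
  generalize Fin.permLastEqEquiv k π = τ at hv ⊢
  have hk : (∃ i, k ≤ (τ i).castSucc) ↔ k ≠ Fin.last (t + 1) := by
    rw [← τ.surjective.exists (p := fun y => k ≤ y.castSucc)]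
    refine ⟨fun ⟨y, hy⟩ => (hy.trans_lt (Fin.castSucc_lt_last y)).ne, fun hk => ?_⟩
    obtain ⟨y, rfl⟩ := Fin.exists_castSucc_eq.2 hk
    exact ⟨y, le_rfl⟩
  rw [avoids3d12_iff_not_contains3d12, avoids3d12_iff_not_contains3d12, contains3d12_iff_init,
    show ⇑π.1 ∘ Fin.castSucc = k.succAbove ∘ τ from funext fun j => (hv j).symm,
    contains3d12_comp_iff (Fin.strictMono_succAbove k), π.2]
  simp only [← hv, Fin.succAbove_lt_iff_castSucc_lt, Fin.lt_succAbove_iff_le_castSucc, hk]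
  rw [not_or, not_and_or, not_lt, not_ne_iff]

theorem card_avoids3d12_last_eq {t : ℕ} (k : Fin (t + 2)) :
    Nat.card {π : Perm (Fin (t + 2)) // Avoids3d12 π ∧ π (Fin.last (t + 1)) = k} =
      Nat.card {τ : Perm (Fin (t + 1)) // Avoids3d12 τ ∧
        (k ≤ (τ (Fin.last t)).castSucc ∨ k = Fin.last (t + 1))} :=
  Nat.card_congr <| (subtypeEquivRight fun _ => and_comm).trans <|
    (subtypeSubtypeEquivSubtypeInter _ Avoids3d12).symm.trans <|
      (Fin.permLastEqEquiv k).subtypeEquiv (avoids3d12_iff_permLastEqEquiv k)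

namespace Avoids3d12

noncomputable def countLastEq (m c : ℕ) : ℕ :=
  Nat.card {π : Perm (Fin (m + 1)) // Avoids3d12 π ∧ (π (Fin.last m) : ℕ) = c}

noncomputable def countLastGe (m c : ℕ) : ℕ :=
  Nat.card {π : Perm (Fin (m + 1)) // Avoids3d12 π ∧ c ≤ (π (Fin.last m) : ℕ)}

theorem countLastGe_eq_add (m c : ℕ) :
    countLastGe m c = countLastEq m c + countLastGe m (c + 1) := by
  classical
  rw [countLastGe, countLastEq, countLastGe, ← Nat.card_sum]
  refine Nat.card_congr ((subtypeEquivRight fun π => ?_).trans (subtypeOrEquiv _ _ ?_))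
  · rw [← and_or_left]
    exact and_congr_right fun _ => by omega
  · simp only [Pi.disjoint_iff, Prop.disjoint_iff]
    omega

theorem countLastGe_succ_self (m : ℕ) : countLastGe m (m + 1) = 0 :=
  Nat.card_eq_zero.2 <| .inl ⟨fun ⟨π, _, h⟩ => (π (Fin.last m)).isLt.not_ge h⟩

theorem countLastEq_succ {t c : ℕ} (hc : c < t + 2) :
    countLastEq (t + 1) c =
      Nat.card {τ : Perm (Fin (t + 1)) // Avoids3d12 τ ∧ (c ≤ τ (Fin.last t) ∨ c = t + 1)} := by
  calc countLastEq (t + 1) c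
      = Nat.card {π : Perm (Fin (t + 2)) // Avoids3d12 π ∧ π (Fin.last (t + 1)) = ⟨c, hc⟩} :=
        Nat.card_congr (subtypeEquivRight fun π => by rw [Fin.ext_iff])
    _ = _ := card_avoids3d12_last_eq _
    _ = _ := Nat.card_congr (subtypeEquivRight fun τ => by
        simp [Fin.le_iff_val_le_val, Fin.ext_iff])

theorem countLastEq_succ_of_le {t c : ℕ} (hc : c ≤ t) :
    countLastEq (t + 1) c = countLastGe t c := by
  rw [countLastEq_succ (by omega), countLastGe]
  exact Nat.card_congr (subtypeEquivRight fun τ => and_congr_right fun _ => by omega)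

theorem countLastEq_succ_self (t : ℕ) : countLastEq (t + 1) (t + 1) = countLastGe t 0 := by
  rw [countLastEq_succ (by omega), countLastGe]
  exact Nat.card_congr (subtypeEquivRight fun τ => and_congr_right fun _ => by omega)

theorem countLastGe_zero_zero : countLastGe 0 0 = 1 :=
  Nat.card_eq_one_iff_unique.2
    ⟨⟨fun _ _ => Subtype.ext (Subsingleton.elim (α := Perm (Fin 1)) _ _)⟩,
      ⟨⟨1, fun ⟨_, _, h, _⟩ => by omega, Nat.zero_le _⟩⟩⟩

/-- `Δ^c B (m + 1 - c)` is the backward difference `∇^c B (m + 1)`. -/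
theorem countLastGe_eq_fwdDiff_bell {m c : ℕ} (hc : c ≤ m) :
    (countLastGe m c : ℤ) = (Δ_[1])^[c] (fun x => (Nat.bell x : ℤ)) (m + 1 - c) := by
  induction m generalizing c with
  | zero =>
    obtain rfl : c = 0 := by omega
    simp [countLastGe_zero_zero]
  | succ m ih =>
    induction hc using Nat.decreasingInduction with
    | self =>
      rw [countLastGe_eq_add, countLastEq_succ_self, countLastGe_succ_self, Nat.add_zero,
        ih (Nat.zero_le m), Nat.add_sub_cancel_left, fwdDiff_iter_bell_one]
      simp
    | of_succ c hc ihc =>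
      rw [countLastGe_eq_add, countLastEq_succ_of_le (by omega), Nat.cast_add, ih (by omega), ihc,
        Function.iterate_succ_apply', fwdDiff, show m + 1 + 1 - c = m + 1 - c + 1 by omega,
        show m + 1 + 1 - (c + 1) = m + 1 - c by omega]
      ring

end Avoids3d12

theorem bell_distribution (n : ℕ) (hn : 2 ≤ n) :
    Nat.card {π : Equiv.Perm (Fin n) // Avoids3d12 π ∧ π ⟨n - 1, by omega⟩ = ⟨n - 1, by omega⟩} = bell (n - 1) ∧
    ∀ k : ℕ, (hk1 : 1 ≤ k) → (hk2 : k ≤ n - 1) →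
      (Nat.card {π : Equiv.Perm (Fin n) // Avoids3d12 π ∧ π ⟨n - 1, by omega⟩ = ⟨k - 1, by omega⟩} : ℤ) =
        ∑ i ∈ Finset.range (k), (-1 : ℤ) ^ i * (((k - 1)).choose i) * (bell (n - 1 - i) : ℤ) := by
  obtain ⟨m, rfl⟩ : ∃ m, n = m + 2 := ⟨n - 2, by omega⟩
  have hcount (c : ℕ) (hc : c < m + 2) : Nat.card {π : Perm (Fin (m + 2)) //
      Avoids3d12 π ∧ π ⟨m + 2 - 1, by omega⟩ = ⟨c, hc⟩} = Avoids3d12.countLastEq (m + 1) c :=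
    Nat.card_congr (subtypeEquivRight fun π => by rw [Fin.ext_iff]; rfl)
  refine ⟨?_, fun k hk1 hk2 => ?_⟩
  · rw [hcount, show m + 2 - 1 = m + 1 from rfl, Avoids3d12.countLastEq_succ_self,
      ← Nat.cast_inj (R := ℤ), Avoids3d12.countLastGe_eq_fwdDiff_bell (Nat.zero_le m),
      bell_eq_natBell]
    rfl
  · rw [hcount, Avoids3d12.countLastEq_succ_of_le (by omega),
      Avoids3d12.countLastGe_eq_fwdDiff_bell (by omega), fwdDiff_iter_eq_sum_sub,
      Nat.sub_add_cancel hk1]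
    refine sum_congr rfl fun i _ => ?_
    rw [bell_eq_natBell]
    congr 3
    omega
end

section
/- For every n ≥ 1 and every k with 1 ≤ k ≤ n, the number N of permutations π ∈ S_n that avoid the generalized pattern 13-2 and satisfy π_1 = k is ((n-k+1)/n)·C(n+k-2, n-1); equivalently, n · N = (n-k+1) · C(n+k-2, n-1). -/
/-- `π` avoids the generalized pattern 13-2. -/
def Avoids13d2 {n : ℕ} (π : Equiv.Perm (Fin n)) : Prop :=
  ¬ ∃ (i j : Fin n) (h : i.1 + 1 < n), i.1 + 1 < j.1 ∧ π i < π j ∧ π j < π ⟨i.1 + 1, h⟩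

namespace Ballot132

open Equiv

/-- value of `succAbove` -/
lemma sa_val {n : ℕ} (P : Fin (n + 2)) (i : Fin (n + 1)) :
    (P.succAbove i).val = if i.val < P.val then i.val else i.val + 1 := by
  rw [Fin.succAbove]
  split
  · rename_i h
    simp only [Fin.coe_castSucc]
    rw [if_pos (by simpa [Fin.lt_def] using h)]
  · rename_i h
    simp only [Fin.val_succ]
    rw [if_neg (by simp [Fin.lt_def, not_lt] at h ⊢; omega)]

/-- number of avoiders of length n+1 with first value p -/
noncomputable def F (n p : ℕ) : ℕ :=
  Nat.card {π : Equiv.Perm (Fin (n + 1)) // Avoids13d2 π ∧ (π 0).val = p}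

/-- number of avoiders of length n+1 with first value ≤ p -/
noncomputable def G (n p : ℕ) : ℕ :=
  Nat.card {π : Equiv.Perm (Fin (n + 1)) // Avoids13d2 π ∧ (π 0).val ≤ p}

lemma perm_ext {n : ℕ} {π π' : Equiv.Perm (Fin (n + 2))}
    (h0 : π 0 = π' 0) (hs : ∀ i : Fin (n + 1), π i.succ = π' i.succ) : π = π' :=
  Equiv.ext fun a => Fin.cases h0 hs a

/-- key transfer lemma -/
lemma avoids_transfer {n : ℕ} (P : Fin (n + 2)) (π : Equiv.Perm (Fin (n + 2)))
    (σ : Equiv.Perm (Fin (n + 1)))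
    (H0 : π 0 = P) (Hs : ∀ i : Fin (n + 1), π i.succ = P.succAbove (σ i)) :
    Avoids13d2 π ↔ (Avoids13d2 σ ∧ (σ 0).val ≤ P.val) := by
  constructor
  · intro hA
    constructor
    · rintro ⟨i, j, h, hij, h1, h2⟩
      apply hA
      have h' : i.succ.1 + 1 < n + 2 := by simp [Fin.val_succ]; omega
      refine ⟨i.succ, j.succ, h', by simp [Fin.val_succ]; omega, ?_, ?_⟩
      · rw [Hs, Hs]
        exact Fin.succAbove_lt_succAbove_iff.mpr h1
      · have e1 : (⟨i.succ.1 + 1, h'⟩ : Fin (n + 2)) = (⟨i.1 + 1, h⟩ : Fin (n + 1)).succ := by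
          apply Fin.ext; simp [Fin.val_succ]
        rw [Hs, e1, Hs]
        exact Fin.succAbove_lt_succAbove_iff.mpr h2
    · by_contra hle
      push_neg at hle
      have hPn : P.val < n + 1 := by
        have := (σ 0).isLt
        omega
      set t : Fin (n + 1) := ⟨P.val, hPn⟩ with ht
      set m := σ.symm t with hmdef
      have hm : σ m = t := σ.apply_symm_apply t
      have hm0 : (1 : ℕ) ≤ m.1 := by
        rcases Nat.eq_zero_or_pos m.1 with h0 | h0
        · exfalso
          have : m = 0 := Fin.ext h0
          rw [this] at hm
          have : (σ 0).val = P.val := by rw [hm]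
          omega
        · omega
      apply hA
      have h' : (0 : Fin (n + 2)).1 + 1 < n + 2 := by rw [Fin.val_zero]; omega
      refine ⟨0, m.succ, h', ?_, ?_, ?_⟩
      · simp only [Fin.val_succ, Fin.val_zero]
        omega
      · rw [H0, Hs, hm, Fin.lt_def, sa_val]
        simp [ht]
      · have e1 : (⟨(0 : Fin (n + 2)).1 + 1, h'⟩ : Fin (n + 2)) = (0 : Fin (n + 1)).succ := by
          apply Fin.ext; simp
        rw [Hs, hm, e1, Hs, Fin.lt_def, sa_val, sa_val]
        simp only [ht]
        rw [if_neg (by omega), if_neg (by omega)]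
        omega
  · rintro ⟨hAσ, hle⟩ ⟨i, j, h, hij, h1, h2⟩
    by_cases hi : i.1 = 0
    · have hi0 : i = 0 := Fin.ext hi
      set j' : Fin (n + 1) := ⟨j.1 - 1, by omega⟩ with hj'
      have hjs : j = j'.succ := by apply Fin.ext; simp [hj', Fin.val_succ]; omega
      have e1 : (⟨i.1 + 1, h⟩ : Fin (n + 2)) = (0 : Fin (n + 1)).succ := by
        apply Fin.ext; simp [hi]
      rw [hi0, H0] at h1
      rw [hjs, Hs] at h1 h2
      rw [e1, Hs] at h2
      have hlt : σ j' < σ 0 := Fin.succAbove_lt_succAbove_iff.mp h2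
      rw [Fin.lt_def, sa_val] at h1
      rw [Fin.lt_def] at hlt
      split at h1 <;> omega
    · set i' : Fin (n + 1) := ⟨i.1 - 1, by omega⟩ with hi'
      set j' : Fin (n + 1) := ⟨j.1 - 1, by omega⟩ with hj'
      have his : i = i'.succ := by apply Fin.ext; simp [hi', Fin.val_succ]; omega
      have hjs : j = j'.succ := by apply Fin.ext; simp [hj', Fin.val_succ]; omega
      have h' : i'.1 + 1 < n + 1 := by simp [hi']; omega
      have e1 : (⟨i.1 + 1, h⟩ : Fin (n + 2)) = (⟨i'.1 + 1, h'⟩ : Fin (n + 1)).succ := by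
        apply Fin.ext; simp [hi', Fin.val_succ]; omega
      rw [his, Hs] at h1
      rw [hjs, Hs] at h1 h2
      rw [e1, Hs] at h2
      exact hAσ ⟨i', j', h', by simp [hi', hj']; omega,
        Fin.succAbove_lt_succAbove_iff.mp h1, Fin.succAbove_lt_succAbove_iff.mp h2⟩

def toSig {n : ℕ} (P : Fin (n + 2)) (π : Equiv.Perm (Fin (n + 2))) :
    Equiv.Perm (Fin (n + 1)) :=
  Equiv.removeNone (((finSuccEquiv' (0 : Fin (n + 2))).symm.trans π).trans (finSuccEquiv' P))

lemma toSig_spec {n : ℕ} (P : Fin (n + 2)) (π : Equiv.Perm (Fin (n + 2)))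
    (H0 : π 0 = P) (i : Fin (n + 1)) : π i.succ = P.succAbove (toSig P π i) := by
  have hne : π i.succ ≠ P := by
    rw [← H0]; intro h
    exact (Fin.succ_ne_zero i) (π.injective h)
  obtain ⟨y, hy⟩ := Fin.exists_succAbove_eq hne
  have he : (((finSuccEquiv' (0 : Fin (n + 2))).symm.trans π).trans (finSuccEquiv' P))
      (some i) = some y := by
    simp [finSuccEquiv'_symm_some, Fin.zero_succAbove, ← hy, finSuccEquiv'_succAbove]
  have := Equiv.removeNone_some _ ⟨y, he⟩
  rw [he] at this
  rw [← hy]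
  congr 1
  exact (Option.some_injective _ this.symm)

def fromSig {n : ℕ} (P : Fin (n + 2)) (σ : Equiv.Perm (Fin (n + 1))) :
    Equiv.Perm (Fin (n + 2)) :=
  (finSuccEquiv' (0 : Fin (n + 2))).trans ((Equiv.optionCongr σ).trans (finSuccEquiv' P).symm)

lemma fromSig_zero {n : ℕ} (P : Fin (n + 2)) (σ : Equiv.Perm (Fin (n + 1))) :
    fromSig P σ 0 = P := by
  simp [fromSig, finSuccEquiv'_at]

lemma fromSig_succ {n : ℕ} (P : Fin (n + 2)) (σ : Equiv.Perm (Fin (n + 1)))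
    (i : Fin (n + 1)) : fromSig P σ i.succ = P.succAbove (σ i) := by
  have : finSuccEquiv' (0 : Fin (n + 2)) i.succ = some i := by
    rw [← Fin.zero_succAbove, finSuccEquiv'_succAbove]
  simp [fromSig, this, finSuccEquiv'_symm_some]

lemma card_step {n : ℕ} (p : ℕ) (hp : p ≤ n + 1) : F (n + 1) p = G n p := by
  set P : Fin (n + 2) := ⟨p, by omega⟩ with hP
  apply Nat.card_congr
  refine
    { toFun := fun x => ⟨toSig P x.1, ?_⟩
      invFun := fun y => ⟨fromSig P y.1, ?_⟩
      left_inv := ?_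
      right_inv := ?_ }
  · obtain ⟨π, hA, h0⟩ := x
    have H0 : π 0 = P := Fin.ext h0
    have := (avoids_transfer P π (toSig P π) H0 (toSig_spec P π H0)).mp hA
    exact this
  · obtain ⟨σ, hA, h0⟩ := y
    have H0 : fromSig P σ 0 = P := fromSig_zero P σ
    constructor
    · exact (avoids_transfer P (fromSig P σ) σ H0 (fromSig_succ P σ)).mpr ⟨hA, h0⟩
    · rw [H0]
  · rintro ⟨π, hA, h0⟩
    have H0 : π 0 = P := Fin.ext h0
    apply Subtype.ext
    apply perm_ext
    · rw [fromSig_zero, H0]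
    · intro i
      rw [fromSig_succ, toSig_spec P π H0]
  · rintro ⟨σ, hA, h0⟩
    apply Subtype.ext
    apply Equiv.ext
    intro i
    apply Fin.succAbove_right_injective (p := P)
    have H0 : fromSig P σ 0 = P := fromSig_zero P σ
    rw [← toSig_spec P (fromSig P σ) H0 i, fromSig_succ]

lemma G_zero (n : ℕ) : G n 0 = F n 0 := by
  apply Nat.card_congr
  exact Equiv.subtypeEquivRight (fun π => by simp [Nat.le_zero])

lemma G_succ (n p : ℕ) : G n (p + 1) = G n p + F n (p + 1) := by
  rw [G, G, F, ← Nat.card_sum]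
  apply Nat.card_congr
  refine
    { toFun := fun x => if h : (x.1 0).val ≤ p then .inl ⟨x.1, x.2.1, h⟩
        else .inr ⟨x.1, x.2.1, by omega⟩
      invFun := fun y => y.elim (fun z => ⟨z.1, z.2.1, by omega⟩) (fun z => ⟨z.1, z.2.1, by omega⟩)
      left_inv := ?_
      right_inv := ?_ }
  · rintro ⟨π, h⟩
    by_cases hc : (π 0).val ≤ p <;> simp [hc]
  · rintro (⟨π, h⟩ | ⟨π, h⟩)
    · simp [h.2]
    · have : ¬ (π 0).val ≤ p := by omega
      simp [this]

lemma F_gt {n p : ℕ} (h : n < p) : F n p = 0 := by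
  have : IsEmpty {π : Equiv.Perm (Fin (n + 1)) // Avoids13d2 π ∧ (π 0).val = p} := by
    constructor
    rintro ⟨π, _, h0⟩
    have := (π 0).isLt
    omega
  exact Nat.card_of_isEmpty

lemma F_zero_zero : F 0 0 = 1 := by
  rw [F, Nat.card_eq_one_iff_unique]
  constructor
  · constructor
    intro a b
    apply Subtype.ext
    apply Equiv.ext
    intro i
    apply Fin.ext
    omega
  · refine ⟨1, ?_, rfl⟩
    rintro ⟨i, j, h, -⟩
    omega

lemma arith (n p : ℕ) (h : p ≤ n) :
    (n + 1) * ((n + 1 - p) * Nat.choose (n + p + 2) (n + 1)) =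
      (n + 1) * ((n + 2 - p) * Nat.choose (n + p + 1) (n + 1)) +
        (n + 2) * ((n - p) * Nat.choose (n + p + 1) n) := by
  obtain ⟨q, rfl⟩ : ∃ q, n = p + q := ⟨n - p, by omega⟩
  have pas : Nat.choose (p + q + p + 2) (p + q + 1) =
      Nat.choose (p + q + p + 1) (p + q) + Nat.choose (p + q + p + 1) (p + q + 1) := by
    exact Nat.choose_succ_succ' (p + q + p + 1) (p + q)
  have h2 : Nat.choose (p + q + p + 1) (p + q + 1) * (p + q + 1) =
      Nat.choose (p + q + p + 1) (p + q) * (p + 1) := by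
    have := Nat.choose_succ_right_eq (p + q + p + 1) (p + q)
    rwa [show p + q + p + 1 - (p + q) = p + 1 from by omega] at this
  rw [show p + q + 1 - p = q + 1 from by omega, show p + q + 2 - p = q + 2 from by omega,
    show p + q - p = q from by omega]
  zify at pas h2 ⊢
  linear_combination ((p : ℤ) + q + 1) * (q + 1) * pas - h2

lemma main (n : ℕ) : ∀ p : ℕ, (n + 1) * F n p = (n + 1 - p) * Nat.choose (n + p) n := by
  induction n with
  | zero =>
    intro p
    match p with
    | 0 => simp [F_zero_zero]
    | p + 1 => rw [F_gt (Nat.succ_pos p)]; simp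
  | succ n ih =>
    have key : ∀ p : ℕ, (n + 1) * ((n + 2) * F (n + 1) p) =
        (n + 1) * ((n + 2 - p) * Nat.choose (n + 1 + p) (n + 1)) := by
      intro p
      induction p with
      | zero =>
        rw [card_step 0 (by omega), G_zero]
        have h0 := ih 0
        simp only [Nat.add_zero, Nat.sub_zero, Nat.choose_self] at h0 ⊢
        calc (n + 1) * ((n + 2) * F n 0) = (n + 2) * ((n + 1) * F n 0) := by ring
          _ = (n + 2) * ((n + 1) * 1) := by rw [h0]
          _ = (n + 1) * ((n + 2) * 1) := by ring
      | succ p ihp =>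
        by_cases hp : p + 1 ≤ n + 1
        · rw [card_step (p + 1) hp, G_succ, ← card_step p (by omega)]
          have hn1 := ih (p + 1)
          calc (n + 1) * ((n + 2) * (F (n + 1) p + F n (p + 1)))
              = (n + 1) * ((n + 2) * F (n + 1) p) + (n + 2) * ((n + 1) * F n (p + 1)) := by ring
            _ = (n + 1) * ((n + 2 - p) * Nat.choose (n + 1 + p) (n + 1)) +
                (n + 2) * ((n + 1 - (p + 1)) * Nat.choose (n + (p + 1)) n) := by rw [ihp, hn1]
            _ = (n + 1) * ((n + 2 - (p + 1)) * Nat.choose (n + 1 + (p + 1)) (n + 1)) := by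
                have := arith n p (by omega)
                rw [show n + 1 - (p + 1) = n - p from by omega,
                  show n + (p + 1) = n + p + 1 from by omega,
                  show n + 1 + p = n + p + 1 from by omega,
                  show n + 1 + (p + 1) = n + p + 2 from by omega,
                  show n + 2 - (p + 1) = n + 1 - p from by omega]
                exact this.symm
        · rw [F_gt (by omega)]
          rw [show n + 2 - (p + 1) = 0 from by omega]
          simp
    intro p
    have := key p
    exact Nat.eq_of_mul_eq_mul_left (by omega) this

end Ballot132

theorem ballot_distribution (n k : ℕ) (hn : 1 ≤ n) (hk1 : 1 ≤ k) (hkn : k ≤ n) :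
    n * Nat.card {π : Equiv.Perm (Fin n) // Avoids13d2 π ∧ π ⟨0, by omega⟩ = ⟨k - 1, by omega⟩} = (n - k + 1) * (n + k - 2).choose (n - 1) := by
  obtain ⟨m, rfl⟩ : ∃ m, n = m + 1 := ⟨n - 1, by omega⟩
  have hcard : Nat.card {π : Equiv.Perm (Fin (m + 1)) // Avoids13d2 π ∧
      π ⟨0, by omega⟩ = ⟨k - 1, by omega⟩} = Ballot132.F m (k - 1) := by
    apply Nat.card_congr
    apply Equiv.subtypeEquivRight
    intro π
    constructor
    · rintro ⟨hA, h0⟩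
      exact ⟨hA, by rw [show (0 : Fin (m+1)) = ⟨0, by omega⟩ from rfl, h0]⟩
    · rintro ⟨hA, h0⟩
      refine ⟨hA, Fin.ext ?_⟩
      rw [show (⟨0, by omega⟩ : Fin (m+1)) = (0 : Fin (m+1)) from rfl]
      exact h0
  rw [hcard, Ballot132.main m (k - 1),
    show m + 1 - (k - 1) = m + 1 - k + 1 from by omega,
    show m + (k - 1) = m + 1 + k - 2 from by omega,
    show m + 1 - 1 = m from rfl]
end
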